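/- arXiv:2510.27025 — 3 statements merged into one kernel-verified Lean document; each statement's English description precedes it below -/
import Mathlib

section
/- If ρ₁ > 0, ρ₂ > 0, p(u₁) < ε, p(u₂) > ε, and t = (p(u₁) - ε)/(p(u₁) - p(u₂)), then the adjusted state u₁* = (1-t)·u₁ + t·u₂ satisfies p(u₁*) ≥ ε. -/
/-! The pressure `p(ρ, m, E) = (γ - 1)(E - m² / (2ρ))` is positively homogeneous of degree one
and, by Sedrakyan's inequality for the kinetic energy `m² / (2ρ)`, superadditive on states of
positive density; hence it is concave there. The robust parameter `t` is chosen so that the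
convex combination `(1 - t) p(u₁) + t p(u₂)` equals `ε`, and concavity gives `p(u₁*) ≥ ε`. -/

theorem add_sq_div_add_le {K : Type*} [Field K] [LinearOrder K] [IsStrictOrderedRing K]
    {a b : K} (x y : K) (ha : 0 < a) (hb : 0 < b) :
    (x + y) ^ 2 / (a + b) ≤ x ^ 2 / a + y ^ 2 / b := by
  simpa [Fin.sum_univ_two] using
    Finset.univ.sq_sum_div_le_sum_sq_div ![x, y] (g := ![a, b]) (by simp [Fin.forall_fin_two, ha, hb])

namespace Euler

noncomputable def pressure (γ ρ m E : ℝ) : ℝ := (γ - 1) * (E - m ^ 2 / (2 * ρ))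

theorem pressure_mul (γ c ρ m E : ℝ) :
    pressure γ (c * ρ) (c * m) (c * E) = c * pressure γ ρ m E := by
  rcases eq_or_ne c 0 with rfl | hc
  · simp [pressure]
  · unfold pressure
    field_simp

theorem pressure_add_le {γ : ℝ} (hγ : 1 ≤ γ) {ρ₁ ρ₂ : ℝ} (m₁ E₁ m₂ E₂ : ℝ)
    (hρ₁ : 0 < ρ₁) (hρ₂ : 0 < ρ₂) :
    pressure γ ρ₁ m₁ E₁ + pressure γ ρ₂ m₂ E₂ ≤ pressure γ (ρ₁ + ρ₂) (m₁ + m₂) (E₁ + E₂) := by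
  have kinetic : (m₁ + m₂) ^ 2 / (2 * (ρ₁ + ρ₂)) ≤ m₁ ^ 2 / (2 * ρ₁) + m₂ ^ 2 / (2 * ρ₂) := by
    rw [mul_add]
    exact add_sq_div_add_le m₁ m₂ (by positivity) (by positivity)
  unfold pressure
  nlinarith

theorem pressure_convex_combination_le {γ : ℝ} (hγ : 1 ≤ γ) {ρ₁ ρ₂ t : ℝ} (m₁ E₁ m₂ E₂ : ℝ)
    (hρ₁ : 0 < ρ₁) (hρ₂ : 0 < ρ₂) (ht₀ : 0 < t) (ht₁ : t < 1) :
    (1 - t) * pressure γ ρ₁ m₁ E₁ + t * pressure γ ρ₂ m₂ E₂ ≤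
      pressure γ ((1 - t) * ρ₁ + t * ρ₂) ((1 - t) * m₁ + t * m₂) ((1 - t) * E₁ + t * E₂) := by
  rw [← pressure_mul, ← pressure_mul]
  exact pressure_add_le hγ _ _ _ _ (by nlinarith) (by positivity)

end Euler

theorem mem_Ioo_and_interpolate_eq_of_lt_of_lt {a b ε t : ℝ} (ha : a < ε) (hb : ε < b)
    (ht : t = (a - ε) / (a - b)) : t ∈ Set.Ioo 0 1 ∧ (1 - t) * a + t * b = ε := by
  have hab : a - b < 0 := by linarith
  subst ht
  refine ⟨⟨div_pos_of_neg_of_neg (by linarith) hab, ?_⟩, ?_⟩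
  · rw [div_lt_one_of_neg hab]
    linarith
  · field_simp [hab.ne]
    ring

theorem robust_scaling_adjustment_general
    (γ ε : ℝ) (hγ : 1 < γ)
    (ρ₁ m₁ E₁ ρ₂ m₂ E₂ : ℝ) (hρ₁ : 0 < ρ₁) (hρ₂ : 0 < ρ₂)
    (hp₁ : (γ - 1) * (E₁ - m₁ ^ 2 / (2 * ρ₁)) < ε)
    (hp₂ : ε < (γ - 1) * (E₂ - m₂ ^ 2 / (2 * ρ₂)))
    (t : ℝ)
    (ht : t = ((γ - 1) * (E₁ - m₁ ^ 2 / (2 * ρ₁)) - ε)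
        / ((γ - 1) * (E₁ - m₁ ^ 2 / (2 * ρ₁)) - (γ - 1) * (E₂ - m₂ ^ 2 / (2 * ρ₂)))) :
    ε ≤ (γ - 1) * (((1 - t) * E₁ + t * E₂)
        - ((1 - t) * m₁ + t * m₂) ^ 2 / (2 * ((1 - t) * ρ₁ + t * ρ₂))) := by
  obtain ⟨⟨ht₀, ht₁⟩, hε⟩ := mem_Ioo_and_interpolate_eq_of_lt_of_lt hp₁ hp₂ ht
  calc ε = (1 - t) * Euler.pressure γ ρ₁ m₁ E₁ + t * Euler.pressure γ ρ₂ m₂ E₂ := hε.symm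
    _ ≤ _ := Euler.pressure_convex_combination_le hγ.le m₁ E₁ m₂ E₂ hρ₁ hρ₂ ht₀ ht₁

/-- With the robust scaling parameter `t = (p(u₁) - ε)/(p(u₁) - p(u₂))`, the adjusted
state has pressure at least `ε`. -/
theorem robust_scaling_adjustment
    (γ ε : ℝ) (hγ : 1 < γ) (hε : 0 < ε)
    (ρ₁ m₁ E₁ ρ₂ m₂ E₂ : ℝ) (hρ₁ : 0 < ρ₁) (hρ₂ : 0 < ρ₂)
    (hp₁ : (γ - 1) * (E₁ - m₁ ^ 2 / (2 * ρ₁)) < ε)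
    (hp₂ : ε < (γ - 1) * (E₂ - m₂ ^ 2 / (2 * ρ₂)))
    (t : ℝ)
    (ht : t = ((γ - 1) * (E₁ - m₁ ^ 2 / (2 * ρ₁)) - ε)
        / ((γ - 1) * (E₁ - m₁ ^ 2 / (2 * ρ₁)) - (γ - 1) * (E₂ - m₂ ^ 2 / (2 * ρ₂)))) :
    ε ≤ (γ - 1) * (((1 - t) * E₁ + t * E₂)
        - ((1 - t) * m₁ + t * m₂) ^ 2 / (2 * ((1 - t) * ρ₁ + t * ρ₂))) :=
  robust_scaling_adjustment_general γ ε hγ ρ₁ m₁ E₁ ρ₂ m₂ E₂ hρ₁ hρ₂ hp₁ hp₂ t ht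
end

section
/- Under the sweeping node adjustment with t ∈ (0,1), the average pressure of the sequence is monotonically nondecreasing and bounded above by the pressure of the (invariant) average state: (1/n)·Σⱼ p(uⱼ*) ≥ (1/n)·Σⱼ p(uⱼ), and (1/n)·Σⱼ p(uⱼ) ≤ p(ū) for any states with positive densities, where ū = (1/n)·Σⱼ uⱼ. -/
private lemma two_pt (a b x y : ℝ) (hx : 0 < x) (hy : 0 < y) :
    (a + b) ^ 2 / (x + y) ≤ a ^ 2 / x + b ^ 2 / y := by
  rw [div_add_div _ _ hx.ne' hy.ne', div_le_div_iff₀ (by positivity) (by positivity)]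
  nlinarith [sq_nonneg (a * y - b * x), mul_pos hx hy]

private lemma convex_pt (a b x y s : ℝ) (hx : 0 < x) (hy : 0 < y)
    (hs0 : 0 < s) (hs1 : s < 1) :
    (s * a + (1 - s) * b) ^ 2 / (s * x + (1 - s) * y)
      ≤ s * (a ^ 2 / x) + (1 - s) * (b ^ 2 / y) := by
  have h1 : 0 < 1 - s := by linarith
  have := two_pt (s * a) ((1 - s) * b) (s * x) ((1 - s) * y)
    (by positivity) (by positivity)
  calc (s * a + (1 - s) * b) ^ 2 / (s * x + (1 - s) * y)
      ≤ (s * a) ^ 2 / (s * x) + ((1 - s) * b) ^ 2 / ((1 - s) * y) := this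
    _ = s * (a ^ 2 / x) + (1 - s) * (b ^ 2 / y) := by
        field_simp

/-- Under the sweeping node adjustment with `t ∈ (0,1)`, the average pressure is
nondecreasing, and the average pressure is bounded above by the pressure of the
average state. -/
theorem sweep_average_pressure
    (γ : ℝ) (hγ : 1 < γ)
    (n : ℕ) (hn : 0 < n) (u : ℕ → Fin 3 → ℝ) (j : ℕ) (hj : j + 1 < n)
    (t : ℝ) (ht0 : 0 < t) (ht1 : t < 1)
    (hρ : ∀ k < n, 0 < u k 0)
    (u' : ℕ → Fin 3 → ℝ)
    (h'j : u' j = (1 - t) • u j + t • u (j + 1))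
    (h'j1 : u' (j + 1) = t • u j + (1 - t) • u (j + 1))
    (h'other : ∀ k, k ≠ j → k ≠ j + 1 → u' k = u k) :
    ((n : ℝ)⁻¹ * ∑ k ∈ Finset.range n,
        (γ - 1) * (u' k 2 - (u' k 1) ^ 2 / (2 * u' k 0))
      ≥ (n : ℝ)⁻¹ * ∑ k ∈ Finset.range n,
        (γ - 1) * (u k 2 - (u k 1) ^ 2 / (2 * u k 0))) ∧
    ((n : ℝ)⁻¹ * ∑ k ∈ Finset.range n,
        (γ - 1) * (u k 2 - (u k 1) ^ 2 / (2 * u k 0))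
      ≤ (γ - 1) * (((n : ℝ)⁻¹ • ∑ k ∈ Finset.range n, u k) 2
          - (((n : ℝ)⁻¹ • ∑ k ∈ Finset.range n, u k) 1) ^ 2
            / (2 * ((n : ℝ)⁻¹ • ∑ k ∈ Finset.range n, u k) 0))) := by
  have hγ1 : (0:ℝ) < γ - 1 := by linarith
  have hninv : (0:ℝ) < (n : ℝ)⁻¹ := by positivity
  set F : ℕ → ℝ := fun k => (γ - 1) * (u k 2 - (u k 1) ^ 2 / (2 * u k 0)) with hF
  set F' : ℕ → ℝ := fun k => (γ - 1) * (u' k 2 - (u' k 1) ^ 2 / (2 * u' k 0)) with hF'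
  constructor
  · -- part 1
    have hjj1 : j ≠ j + 1 := by omega
    have hsub : ({j, j + 1} : Finset ℕ) ⊆ Finset.range n := by
      intro k hk
      simp only [Finset.mem_insert, Finset.mem_singleton] at hk
      rcases hk with rfl | rfl <;> simp [Finset.mem_range] <;> omega
    have hsplit : ∑ k ∈ Finset.range n, (F' k - F k)
        = (F' j - F j) + (F' (j+1) - F (j+1)) := by
      rw [← Finset.sum_subset hsub (fun k _ hk => ?_), Finset.sum_pair hjj1]
      simp only [Finset.mem_insert, Finset.mem_singleton, not_or] at hk
      simp only [hF, hF', h'other k hk.1 hk.2]; ring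
    have hρj := hρ j (by omega)
    have hρj1 := hρ (j+1) hj
    have key : F j + F (j+1) ≤ F' j + F' (j+1) := by
      have ej : u' j 2 = (1 - t) * u j 2 + t * u (j+1) 2 := by
        rw [h'j]; simp
      have ej1 : u' (j+1) 2 = t * u j 2 + (1 - t) * u (j+1) 2 := by
        rw [h'j1]; simp
      have mj : u' j 1 = (1 - t) * u j 1 + t * u (j+1) 1 := by rw [h'j]; simp
      have mj1 : u' (j+1) 1 = t * u j 1 + (1 - t) * u (j+1) 1 := by rw [h'j1]; simp
      have rj : u' j 0 = (1 - t) * u j 0 + t * u (j+1) 0 := by rw [h'j]; simp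
      have rj1 : u' (j+1) 0 = t * u j 0 + (1 - t) * u (j+1) 0 := by rw [h'j1]; simp
      have h1 := convex_pt (u j 1) (u (j+1) 1) (u j 0) (u (j+1) 0) (1 - t)
        hρj hρj1 (by linarith) (by linarith)
      have h2 := convex_pt (u j 1) (u (j+1) 1) (u j 0) (u (j+1) 0) t
        hρj hρj1 ht0 ht1
      simp only [hF, hF', ej, ej1, mj, mj1, rj, rj1]
      have e1 : (2:ℝ) * ((1 - t) * u j 0 + t * u (j+1) 0)
          = 2 * (((1-t) * u j 0 + t * u (j+1) 0)) := rfl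
      -- reduce to h1, h2
      have d1 : ((1 - t) * u j 1 + t * u (j+1) 1) ^ 2
            / (2 * ((1 - t) * u j 0 + t * u (j+1) 0))
          ≤ ((1 - t) * ((u j 1)^2 / u j 0) + t * ((u (j+1) 1)^2 / u (j+1) 0)) / 2 := by
        rw [mul_comm (2:ℝ), ← div_div]
        have h1' : (1 - (1-t)) = t := by ring
        rw [h1'] at h1
        exact div_le_div_of_nonneg_right h1 (by norm_num) |>.trans_eq rfl
      have d2 : (t * u j 1 + (1 - t) * u (j+1) 1) ^ 2
            / (2 * (t * u j 0 + (1 - t) * u (j+1) 0))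
          ≤ (t * ((u j 1)^2 / u j 0) + (1 - t) * ((u (j+1) 1)^2 / u (j+1) 0)) / 2 := by
        rw [mul_comm (2:ℝ), ← div_div]
        exact div_le_div_of_nonneg_right h2 (by norm_num)
      have hsum : ((1 - t) * u j 1 + t * u (j+1) 1) ^ 2
            / (2 * ((1 - t) * u j 0 + t * u (j+1) 0))
          + (t * u j 1 + (1 - t) * u (j+1) 1) ^ 2
            / (2 * (t * u j 0 + (1 - t) * u (j+1) 0))
          ≤ (u j 1) ^ 2 / (2 * u j 0) + (u (j+1) 1) ^ 2 / (2 * u (j+1) 0) := by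
        have := add_le_add d1 d2
        refine this.trans (le_of_eq ?_)
        field_simp
        ring
      nlinarith [hsum]
    have : ∑ k ∈ Finset.range n, F k ≤ ∑ k ∈ Finset.range n, F' k := by
      have : 0 ≤ ∑ k ∈ Finset.range n, (F' k - F k) := by
        rw [hsplit]; linarith
      rw [Finset.sum_sub_distrib] at this
      linarith
    exact mul_le_mul_of_nonneg_left this hninv.le
  · -- part 2 : Jensen
    have hR : 0 < ∑ k ∈ Finset.range n, u k 0 :=
      Finset.sum_pos (fun k hk => hρ k (Finset.mem_range.mp hk)) (by
        simp [Finset.nonempty_range_iff]; omega)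
    have hCS : (∑ k ∈ Finset.range n, u k 1) ^ 2 / ∑ k ∈ Finset.range n, u k 0
        ≤ ∑ k ∈ Finset.range n, (u k 1) ^ 2 / u k 0 :=
      Finset.sq_sum_div_le_sum_sq_div _ _ (fun k hk => hρ k (Finset.mem_range.mp hk))
    have happ : ∀ i : Fin 3, ((n : ℝ)⁻¹ • ∑ k ∈ Finset.range n, u k) i
        = (n : ℝ)⁻¹ * ∑ k ∈ Finset.range n, u k i := by
      intro i
      simp [Finset.sum_apply]
    rw [happ 0, happ 1, happ 2]
    have hsum : ∑ k ∈ Finset.range n, F k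
        = (γ - 1) * ((∑ k ∈ Finset.range n, u k 2)
            - ∑ k ∈ Finset.range n, (u k 1) ^ 2 / (2 * u k 0)) := by
      simp only [hF]
      rw [← Finset.sum_sub_distrib, Finset.mul_sum]
    set M := ∑ k ∈ Finset.range n, u k 1
    set R := ∑ k ∈ Finset.range n, u k 0
    set E := ∑ k ∈ Finset.range n, u k 2
    have hnR : (0:ℝ) < n := by exact_mod_cast hn
    have hrhs : ((n : ℝ)⁻¹ * M) ^ 2 / (2 * ((n : ℝ)⁻¹ * R))
        = (n : ℝ)⁻¹ * (M ^ 2 / R) / 2 := by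
      field_simp
    have hmain : (n : ℝ)⁻¹ * ∑ k ∈ Finset.range n, F k
        ≤ (γ - 1) * ((n : ℝ)⁻¹ * E - (n : ℝ)⁻¹ * (M ^ 2 / R) / 2) := by
      have hhalf : ∑ k ∈ Finset.range n, (u k 1) ^ 2 / (2 * u k 0)
          = (∑ k ∈ Finset.range n, (u k 1) ^ 2 / u k 0) / 2 := by
        rw [Finset.sum_div]
        refine Finset.sum_congr rfl fun k _ => ?_
        rw [mul_comm, ← div_div]
      rw [hsum, hhalf]
      have : M ^ 2 / R / 2 ≤ (∑ k ∈ Finset.range n, (u k 1) ^ 2 / u k 0) / 2 :=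
        div_le_div_of_nonneg_right hCS (by norm_num)
      have h2 : (γ - 1) * (E - (∑ k ∈ Finset.range n, (u k 1) ^ 2 / u k 0) / 2)
          ≤ (γ - 1) * (E - M ^ 2 / R / 2) :=
        mul_le_mul_of_nonneg_left (by linarith) hγ1.le
      calc (n : ℝ)⁻¹ * ((γ - 1) * (E - (∑ k ∈ Finset.range n, (u k 1) ^ 2 / u k 0) / 2))
          ≤ (n : ℝ)⁻¹ * ((γ - 1) * (E - M ^ 2 / R / 2)) :=
            mul_le_mul_of_nonneg_left h2 hninv.le
        _ = (γ - 1) * ((n : ℝ)⁻¹ * E - (n : ℝ)⁻¹ * (M ^ 2 / R) / 2) := by ring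
    rw [hrhs]
    exact hmain
end

section
/- Correctness of the scalar sweeping algorithm: if ρ₁, …, ρₙ are real numbers with (1/n)·Σⱼ ρⱼ ≥ ε, then after one forward sweep (for j = 1 to n-1: if ρⱼ < ε, add ρⱼ - ε to ρⱼ₊₁ and set ρⱼ := ε) followed by one backward sweep (for j = n down to 2: if ρⱼ < ε, add ρⱼ - ε to ρⱼ₋₁ and set ρⱼ := ε), all entries satisfy ρⱼ ≥ ε, and the sum Σⱼ ρⱼ is unchanged. -/
/-- The forward sweep: for `j = 1` to `n-1`, if `ρⱼ < ε`, move the deficit `ρⱼ - ε`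
to the next entry and set `ρⱼ := ε`. -/
noncomputable def fsweep (ε : ℝ) : List ℝ → List ℝ
  | [] => []
  | [x] => [x]
  | x :: y :: rest =>
    if x < ε then ε :: fsweep ε ((y + (x - ε)) :: rest)
    else x :: fsweep ε (y :: rest)
termination_by l => l.length


lemma fsweep_sum (ε : ℝ) (l : List ℝ) : (fsweep ε l).sum = l.sum := by
  induction l using fsweep.induct ε with
  | case1 => simp [fsweep]
  | case2 x => simp [fsweep]
  | case3 x y rest h ih => rw [fsweep]; simp [h, ih]; ring
  | case4 x y rest h ih => rw [fsweep]; simp [h, ih]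

lemma fsweep_length (ε : ℝ) (l : List ℝ) : (fsweep ε l).length = l.length := by
  induction l using fsweep.induct ε with
  | case1 => simp [fsweep]
  | case2 x => simp [fsweep]
  | case3 x y rest h ih => rw [fsweep]; simp [h, ih]
  | case4 x y rest h ih => rw [fsweep]; simp [h, ih]

lemma fsweep_ne (ε : ℝ) (l : List ℝ) (h : l ≠ []) : fsweep ε l ≠ [] := by
  match l with
  | [x] => rw [fsweep]; simp
  | x :: y :: rest => rw [fsweep]; split <;> simp

lemma fsweep_dropLast (ε : ℝ) (l : List ℝ) :
    ∀ x ∈ (fsweep ε l).dropLast, ε ≤ x := by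
  induction l using fsweep.induct ε with
  | case1 => simp [fsweep]
  | case2 x => simp [fsweep]
  | case3 x y rest h ih =>
    rw [fsweep, if_pos h]
    rw [List.dropLast_cons_of_ne_nil (fsweep_ne ε _ (by simp))]
    intro z hz
    rcases List.mem_cons.1 hz with rfl | hz
    · exact le_refl _
    · exact ih z hz
  | case4 x y rest h ih =>
    rw [fsweep, if_neg h]
    rw [List.dropLast_cons_of_ne_nil (fsweep_ne ε _ (by simp))]
    intro z hz
    rcases List.mem_cons.1 hz with rfl | hz
    · linarith
    · exact ih z hz

lemma fsweep_id (ε : ℝ) (l : List ℝ) (h : ∀ x ∈ l, ε ≤ x) : fsweep ε l = l := by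
  induction l using fsweep.induct ε with
  | case1 => rw [fsweep]
  | case2 x => rw [fsweep]
  | case3 x y rest hx ih =>
    exact absurd (h x (by simp)) (not_le.2 hx)
  | case4 x y rest hx ih =>
    rw [fsweep, if_neg hx, ih fun z hz => h z (List.mem_cons_of_mem _ hz)]

lemma fsweep_all (ε : ℝ) (l : List ℝ) (htail : ∀ x ∈ l.tail, ε ≤ x)
    (hsum : ε * l.length ≤ l.sum) : ∀ x ∈ fsweep ε l, ε ≤ x := by
  induction l using fsweep.induct ε with
  | case1 => simp [fsweep]
  | case2 x =>
    rw [fsweep]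
    intro z hz
    simp at hz hsum
    linarith
  | case3 x y rest hx ih =>
    rw [fsweep, if_pos hx]
    intro z hz
    rcases List.mem_cons.1 hz with rfl | hz
    · exact le_refl _
    · refine ih ?_ ?_ z hz
      · intro w hw
        exact htail w (by simpa using Or.inr hw)
      · simp at hsum ⊢
        linarith
  | case4 x y rest hx ih =>
    rw [fsweep, if_neg hx,
      fsweep_id ε (y :: rest) (fun z hz => htail z (by simpa using hz))]
    intro z hz
    rcases List.mem_cons.1 hz with rfl | hz
    · linarith
    · exact htail z (by simpa using hz)

/-- The backward sweep: the forward sweep applied to the reversed list. -/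
noncomputable def bsweep (ε : ℝ) (l : List ℝ) : List ℝ :=
  (fsweep ε l.reverse).reverse

/-- Correctness of the scalar sweeping algorithm: if the mean is at least `ε`, then after
one forward sweep followed by one backward sweep, all entries are at least `ε` and the
sum is unchanged. -/
theorem scalar_sweeping_correct (ε : ℝ) (l : List ℝ) (hne : l ≠ [])
    (hmean : ε ≤ l.sum / l.length) :
    (∀ x ∈ bsweep ε (fsweep ε l), ε ≤ x) ∧ (bsweep ε (fsweep ε l)).sum = l.sum := by
  unfold bsweep
  have hlen : (0:ℝ) < l.length := by
    have := List.length_pos_iff.2 hne; exact_mod_cast this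
  have hsum : ε * l.length ≤ l.sum := by
    rw [le_div_iff₀ hlen] at hmean; linarith
  set m := fsweep ε l with hm
  have hms : m.sum = l.sum := fsweep_sum ε l
  have hmne : m ≠ [] := fsweep_ne ε l hne
  have htail : ∀ x ∈ m.reverse.tail, ε ≤ x := by
    intro x hx
    apply fsweep_dropLast ε l
    have : m.reverse.tail = m.dropLast.reverse := by
      conv_lhs => rw [← m.dropLast_append_getLast hmne]
      simp
    rw [this] at hx
    simpa using hx
  have hall : ∀ x ∈ fsweep ε m.reverse, ε ≤ x := by
    apply fsweep_all ε m.reverse htail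
    simp only [List.sum_reverse, List.length_reverse]
    rw [hms]
    calc ε * m.length = ε * l.length := by
          rw [show m.length = l.length from fsweep_length ε l]
      _ ≤ l.sum := hsum
  constructor
  · intro x hx
    exact hall x (List.mem_reverse.1 hx)
  · rw [List.sum_reverse, fsweep_sum, List.sum_reverse, hms]
end
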